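/- For the Set expressive support and a symbol a, the partial derivative of a regular expression is a finite set of expressions, and toExp of the derivative of a sum/product satisfies: toExp(d_a(E₁+E₂)) denotes the same series as toExp(d_a(E₁)) + toExp(d_a(E₂)), and toExp(d_a(E₁·E₂)) denotes the same series as toExp(d_a(E₁))·E₂ + Null(E₁)⊙toExp(d_a(E₂)). -/

import Mathlib

/-!
The Set support: weights live in the Boolean semiring `Set(𝟙) ≅ (Bool, ∨, ∧, true, false)`,
with `+ = ∪ = or` and `× = ∩ = and`.
-/

/-- Regular expressions over an alphabet `A`, with Boolean scalars (the Set support). -/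
inductive RExp (A : Type) : Type
  | sym : A → RExp A
  | eps : RExp A
  | empty : RExp A
  | plus : RExp A → RExp A → RExp A
  | times : RExp A → RExp A → RExp A
  | star : RExp A → RExp A
  | lact : Bool → RExp A → RExp A
  | ract : RExp A → Bool → RExp A

variable {A : Type}

/-- The nullability value over the Boolean semiring. -/
def RExp.null : RExp A → Bool
  | .sym _ => false
  | .eps => true
  | .empty => false
  | .plus e₁ e₂ => e₁.null || e₂.null
  | .times e₁ e₂ => e₁.null && e₂.null
  | .star _ => true
  | .lact k e => k && e.null
  | .ract e k => e.null && k

/-- Cauchy product of Boolean series: `(S₁ × S₂)(w) = ⋁_{u·v=w} S₁(u) ∧ S₂(v)`. -/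
noncomputable def cauchyB (S₁ S₂ : List A → Bool) : List A → Bool :=
  fun w => (Finset.range (w.length + 1)).sup (fun i => S₁ (w.take i) && S₂ (w.drop i))

/-- Star of a Boolean series: disjunction over factorizations into nonempty factors. -/
noncomputable def starSeriesB (S : List A → Bool) : List A → Bool
  | [] => true
  | w => (Finset.univ : Finset (Composition w.length)).sup
      (fun c => (w.splitWrtComposition c).all S)

/-- The Boolean series (language) denoted by a regular expression. -/
noncomputable def RExp.series [DecidableEq A] : RExp A → List A → Bool
  | .sym a, w => decide (w = [a])
  | .eps, w => decide (w = [])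
  | .empty, _ => false
  | .plus e₁ e₂, w => e₁.series w || e₂.series w
  | .times e₁ e₂, w => cauchyB e₁.series e₂.series w
  | .star e, w => starSeriesB e.series w
  | .lact k e, w => k && e.series w
  | .ract e k, w => e.series w && k

/-- The partial derivative of a regular expression (Set support): the monadic derivative
specialized to the powerset monad, which coincides with Antimirov's partial derivative. -/
def dSet [DecidableEq A] (a : A) : RExp A → Set (RExp A)
  | .sym b => if a = b then {RExp.eps} else ∅
  | .eps => ∅
  | .empty => ∅
  | .plus e₁ e₂ => dSet a e₁ ∪ dSet a e₂
  | .times e₁ e₂ =>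
      ((fun E => E.times e₂) '' dSet a e₁) ∪ (if e₁.null then dSet a e₂ else ∅)
  | .star e => (fun E => E.times (RExp.star e)) '' dSet a e
  | .lact α e => if α then dSet a e else ∅
  | .ract e α => (fun E => E.ract α) '' dSet a e

open Classical in
/-- `toExp` of the Set support: the sum of the (finitely many) expressions of a set. -/
noncomputable def toExpSet (s : Set (RExp A)) : RExp A :=
  if h : s.Finite then h.toFinset.toList.foldr RExp.plus RExp.empty else RExp.empty

theorem dSet_finite [DecidableEq A] (a : A) (E : RExp A) : (dSet a E).Finite := by
  induction E with
  | sym b => by_cases h : a = b <;> simp [dSet, h]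
  | eps | empty => simp [dSet]
  | plus _ _ ih₁ ih₂ => exact ih₁.union ih₂
  | times e₁ _ ih₁ ih₂ => exact (ih₁.image _).union (by split_ifs <;> simp [ih₂])
  | star _ ih | ract _ _ ih => exact ih.image _
  | lact k _ ih => cases k <;> simp [dSet, ih]

theorem Finset.sup_bool_eq_true {ι : Type*} (s : Finset ι) (f : ι → Bool) :
    s.sup f = true ↔ ∃ i ∈ s, f i = true :=
  Finset.sup_eq_top_iff

namespace RExp

variable [DecidableEq A]

theorem series_foldr_plus_eq_true (l : List (RExp A)) (w : List A) :
    (l.foldr plus empty).series w = true ↔ ∃ E ∈ l, E.series w = true := by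
  induction l with
  | nil => simp [series]
  | cons E l ih => simp [series, ih]

theorem series_toExpSet_eq_true {s : Set (RExp A)} (hs : s.Finite) (w : List A) :
    (toExpSet s).series w = true ↔ ∃ E ∈ s, E.series w = true := by
  simp [toExpSet, hs, series_foldr_plus_eq_true]

theorem series_toExpSet_union {s t : Set (RExp A)} (hs : s.Finite) (ht : t.Finite) :
    (toExpSet (s ∪ t)).series = ((toExpSet s).plus (toExpSet t)).series := by
  funext w
  rw [Bool.eq_iff_iff]
  simp only [series, Bool.or_eq_true, series_toExpSet_eq_true (hs.union ht),
    series_toExpSet_eq_true hs, series_toExpSet_eq_true ht, Set.mem_union, or_and_right,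
    exists_or]

theorem series_toExpSet_image_times {s : Set (RExp A)} (hs : s.Finite) (F : RExp A) :
    (toExpSet ((fun E => E.times F) '' s)).series = ((toExpSet s).times F).series := by
  funext w
  rw [Bool.eq_iff_iff, series_toExpSet_eq_true (hs.image _), Set.exists_mem_image]
  simp only [series, cauchyB, Finset.sup_bool_eq_true, Bool.and_eq_true,
    series_toExpSet_eq_true hs]
  exact ⟨fun ⟨E, hE, i, hi, hEi, hFi⟩ => ⟨i, hi, ⟨E, hE, hEi⟩, hFi⟩,
    fun ⟨i, hi, ⟨E, hE, hEi⟩, hFi⟩ => ⟨E, hE, i, hi, hEi, hFi⟩⟩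

theorem series_toExpSet_ite_empty (b : Bool) (s : Set (RExp A)) :
    (toExpSet (if b then s else ∅)).series = (lact b (toExpSet s)).series := by
  funext w
  cases b <;> simp [series, toExpSet]

end RExp

/-- For the Set support, the partial derivative of a regular expression by a symbol is a
finite set of expressions, and `toExp(d_a(E₁+E₂))` denotes the same series as
`toExp(d_a(E₁)) + toExp(d_a(E₂))`, while `toExp(d_a(E₁·E₂))` denotes the same series as
`toExp(d_a(E₁))·E₂ + Null(E₁) ⊙ toExp(d_a(E₂))`. -/
theorem set_support_partial_derivative [DecidableEq A] (a : A) :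
    (∀ E : RExp A, (dSet a E).Finite) ∧
    (∀ (E₁ E₂ : RExp A) (w : List A),
      (toExpSet (dSet a (E₁.plus E₂))).series w
        = ((toExpSet (dSet a E₁)).plus (toExpSet (dSet a E₂))).series w) ∧
    (∀ (E₁ E₂ : RExp A) (w : List A),
      (toExpSet (dSet a (E₁.times E₂))).series w
        = (((toExpSet (dSet a E₁)).times E₂).plus
            (RExp.lact E₁.null (toExpSet (dSet a E₂)))).series w) := by
  refine ⟨dSet_finite a, fun E₁ E₂ w => ?_, fun E₁ E₂ w => ?_⟩
  · exact congrFun (RExp.series_toExpSet_union (dSet_finite a E₁) (dSet_finite a E₂)) w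
  · have hguard : (if E₁.null then dSet a E₂ else ∅).Finite := by
      split_ifs <;> simp [dSet_finite]
    rw [dSet, RExp.series_toExpSet_union ((dSet_finite a E₁).image _) hguard]
    simp only [RExp.series, RExp.series_toExpSet_image_times (dSet_finite a E₁),
      RExp.series_toExpSet_ite_empty]
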